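/- arXiv:2502.10571 — 3 statements merged into one kernel-verified Lean document; each statement's English description precedes it below -/
import Mathlib

section
/- Every Perron semigroup of real 2×2 matrices whose index is two is reducible: its matrices share a common invariant linear subspace V of ℝ² with V ≠ {0} and V ≠ ℝ². -/
open Matrix

open scoped Classical

/-- A complex number `μ` is an eigenvalue of the complex matrix `M`. -/
def IsEigenvalueC {n : Type*} [Fintype n] (M : Matrix n n ℂ) (μ : ℂ) : Prop :=
  ∃ v : n → ℂ, v ≠ 0 ∧ M.mulVec v = μ • v

/-- The spectral radius of a real matrix: the maximum of the moduli of the complex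
eigenvalues of its complexification. -/
noncomputable def spectralRadius' {n : Type*} [Fintype n] (A : Matrix n n ℝ) : ℝ :=
  sSup {r : ℝ | ∃ μ : ℂ, IsEigenvalueC (A.map (fun x : ℝ => (x : ℂ))) μ ∧ r = ‖μ‖}

/-- `A` has a Perron eigenvalue: its spectral radius is a nonnegative eigenvalue of `A`. -/
def HasPerronEigenvalue {n : Type*} [Fintype n] (A : Matrix n n ℝ) : Prop :=
  0 ≤ spectralRadius' A ∧ ∃ v : n → ℝ, v ≠ 0 ∧ A.mulVec v = spectralRadius' A • v

/-- The expansion index of a real matrix: the sum, over all (complex) leading eigenvalues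
(those of modulus equal to the spectral radius), of their geometric multiplicities. -/
noncomputable def expansionIndex {n : Type*} [Fintype n] [DecidableEq n]
    (A : Matrix n n ℝ) : ℕ :=
  ∑ μ ∈ (((A.map (fun x : ℝ => (x : ℂ))).charpoly.roots.toFinset).filter
      (fun μ => ‖μ‖ = spectralRadius' A)),
    Module.finrank ℂ
      (LinearMap.ker (Matrix.toLin' ((A.map (fun x : ℝ => (x : ℂ))) - μ • (1 : Matrix n n ℂ))))

/-- A (multiplicative) semigroup of matrices: a nonempty set closed under multiplication. -/
def IsMatrixSemigroup {n : Type*} [Fintype n] (S : Set (Matrix n n ℝ)) : Prop :=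
  S.Nonempty ∧ ∀ A ∈ S, ∀ B ∈ S, A * B ∈ S

/-- An irreducible set of matrices: no common invariant subspace other than `{0}` and the
whole space. -/
def MatIrreducible {n : Type*} [Fintype n] (S : Set (Matrix n n ℝ)) : Prop :=
  ¬ ∃ V : Submodule ℝ (n → ℝ), V ≠ ⊥ ∧ V ≠ ⊤ ∧ ∀ A ∈ S, ∀ x ∈ V, A.mulVec x ∈ V

/-- A proper cone: a closed convex cone with nonempty interior which is pointed. -/
def IsProperCone {n : Type*} [Fintype n] (K : Set (n → ℝ)) : Prop :=
  IsClosed K ∧ (∀ x ∈ K, ∀ y ∈ K, x + y ∈ K) ∧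
    (∀ t : ℝ, 0 ≤ t → ∀ x ∈ K, t • x ∈ K) ∧
    (interior K).Nonempty ∧ (∀ x ∈ K, -x ∈ K → x = 0)

/-!
Under the Perron hypothesis `ρ = ρ(A)` is an eigenvalue of every `A ∈ S`. If `ρ` is the only
peripheral eigenvalue, expansion index `≥ 2` makes its eigenspace all of `ℂ²`, so `A = ρ • 1`;
otherwise the other peripheral eigenvalue is `tr A - ρ`, a real number of modulus `ρ` different
from `ρ`, so it is `-ρ ≠ 0`: `A` is traceless with `det A = -ρ² < 0`. For two non-scalar
`A₀, A ∈ S` the product `A₀ * A ∈ S` has positive determinant, hence is scalar, and since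
`A₀ * A₀ = -det A₀ • 1` this makes `A` a multiple of `A₀`. So the Perron eigenvector of any
non-scalar element is an eigenvector of all of `S`, and its span is invariant.
-/

open Module Polynomial

namespace Matrix

section CommRing

variable {R : Type*} [CommRing R]

lemma mul_self_eq_neg_det_smul_one_of_trace_eq_zero {A : Matrix (Fin 2) (Fin 2) R}
    (hA : A.trace = 0) : A * A = -A.det • (1 : Matrix (Fin 2) (Fin 2) R) := by
  have hd : A 1 1 = -A 0 0 := by rw [trace_fin_two] at hA; linear_combination hA
  ext i j
  fin_cases i <;> fin_cases j <;> simp [mul_apply, det_fin_two, hd] <;> ring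

lemma add_eq_trace_and_mul_eq_det_of_isRoot_charpoly [IsDomain R] {M : Matrix (Fin 2) (Fin 2) R}
    {x y : R} (hxy : x ≠ y) (hx : M.charpoly.IsRoot x) (hy : M.charpoly.IsRoot y) :
    x + y = M.trace ∧ x * y = M.det := by
  simp only [charpoly_fin_two, IsRoot, eval_add, eval_sub, eval_mul, eval_pow, eval_X,
    eval_C] at hx hy
  have hsum : x + y = M.trace := by
    have : (x - y) * (x + y - M.trace) = 0 := by linear_combination hx - hy
    linear_combination (mul_eq_zero.1 this).resolve_left (sub_ne_zero.2 hxy)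
  exact ⟨hsum, by linear_combination x * hsum - hx⟩

end CommRing

lemma eq_zero_of_card_le_finrank_ker {n K : Type*} [Fintype n] [DecidableEq n] [Field K]
    {N : Matrix n n K} (h : Fintype.card n ≤ finrank K (LinearMap.ker (toLin' N))) : N = 0 := by
  have hker : LinearMap.ker (toLin' N) = ⊤ :=
    Submodule.eq_top_of_finrank_eq ((Submodule.finrank_le _).antisymm (by simpa using h))
  exact toLin'.injective (by simpa using LinearMap.ker_eq_top.1 hker)

section Field

variable {K : Type*} [Field K]

lemma exists_eq_smul_of_mul_eq_scalar {A₀ A : Matrix (Fin 2) (Fin 2) K}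
    (htr : A₀.trace = 0) (hdet : A₀.det ≠ 0) {c : K} (h : A₀ * A = scalar (Fin 2) c) :
    ∃ a : K, A = a • A₀ := by
  have key : -A₀.det • A = c • A₀ := by
    rw [← one_mul A, ← smul_mul, ← mul_self_eq_neg_det_smul_one_of_trace_eq_zero htr, mul_assoc,
      h, scalar_apply, ← smul_one_eq_diagonal, Matrix.mul_smul, mul_one]
  refine ⟨(-A₀.det)⁻¹ * c, ?_⟩
  rw [← smul_smul, ← key, smul_smul, inv_mul_cancel₀ (neg_ne_zero.2 hdet), one_smul]

end Field

end Matrix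

section OrderedField

variable {K : Type*} [Field K] [LinearOrder K] [IsStrictOrderedRing K]

lemma mem_range_scalar_or_exists_eq_smul {S : Set (Matrix (Fin 2) (Fin 2) K)}
    (hmul : ∀ A ∈ S, ∀ B ∈ S, A * B ∈ S)
    (hS : ∀ A ∈ S, A ∈ Set.range (scalar (Fin 2)) ∨ (A.trace = 0 ∧ A.det < 0))
    {A₀ : Matrix (Fin 2) (Fin 2) K} (hA₀ : A₀ ∈ S) (htr : A₀.trace = 0) (hdet : A₀.det < 0) :
    ∀ A ∈ S, A ∈ Set.range (scalar (Fin 2)) ∨ ∃ a : K, A = a • A₀ := by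
  intro A hA
  refine (hS A hA).imp_right fun ⟨_, hAdet⟩ => ?_
  have hprod : 0 < (A₀ * A).det := by rw [det_mul]; exact mul_pos_of_neg_of_neg hdet hAdet
  obtain ⟨c, hc⟩ := (hS _ (hmul A₀ hA₀ A hA)).resolve_right fun h => h.2.not_gt hprod
  exact exists_eq_smul_of_mul_eq_scalar htr hdet.ne hc.symm

lemma exists_common_eigenvector {S : Set (Matrix (Fin 2) (Fin 2) K)}
    (hmul : ∀ A ∈ S, ∀ B ∈ S, A * B ∈ S)
    (hS : ∀ A ∈ S, A ∈ Set.range (scalar (Fin 2)) ∨ (A.trace = 0 ∧ A.det < 0))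
    (heig : ∀ A ∈ S, ∃ v ≠ 0, ∃ c : K, A *ᵥ v = c • v) :
    ∃ v ≠ 0, ∀ A ∈ S, ∃ c : K, A *ᵥ v = c • v := by
  by_cases hscalar : ∀ A ∈ S, A ∈ Set.range (scalar (Fin 2))
  · refine ⟨![1, 0], by simp, fun A hA => ?_⟩
    obtain ⟨c, rfl⟩ := hscalar A hA
    exact ⟨c, by simp⟩
  push Not at hscalar
  obtain ⟨A₀, hA₀, hA₀_scalar⟩ := hscalar
  obtain ⟨htr, hdet⟩ := (hS A₀ hA₀).resolve_left hA₀_scalar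
  obtain ⟨v, hv, c₀, hc₀⟩ := heig A₀ hA₀
  refine ⟨v, hv, fun A hA => ?_⟩
  rcases mem_range_scalar_or_exists_eq_smul hmul hS hA₀ htr hdet A hA with ⟨c, rfl⟩ | ⟨a, rfl⟩
  · exact ⟨c, by simp⟩
  · exact ⟨a * c₀, by rw [smul_mulVec, hc₀, smul_smul]⟩

end OrderedField

lemma Submodule.span_singleton_ne_top_of_one_lt_finrank {K V : Type*} [DivisionRing K]
    [AddCommGroup V] [Module K V] [Module.Finite K V] (h : 1 < finrank K V) (v : V) :
    K ∙ v ≠ ⊤ := by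
  intro htop
  have := finrank_span_le_card (R := K) ({v} : Set V)
  rw [htop, finrank_top, Set.toFinset_singleton, Finset.card_singleton] at this
  omega

section Perron

variable {n : Type*} [Fintype n] [DecidableEq n]

noncomputable def peripheralSpectrum (A : Matrix n n ℝ) : Finset ℂ :=
  ((A.map (fun x : ℝ => (x : ℂ))).charpoly.roots.toFinset).filter
    (fun μ => ‖μ‖ = spectralRadius' A)

lemma isRoot_charpoly_map_ofReal {A : Matrix n n ℝ} {v : n → ℝ} {c : ℝ} (hv : v ≠ 0)
    (hAv : A *ᵥ v = c • v) : (A.map (fun x : ℝ => (x : ℂ))).charpoly.IsRoot c := by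
  have hc : Module.End.HasEigenvalue (toLin' A) c := Module.End.hasEigenvalue_of_hasEigenvector
    ⟨by simpa [Module.End.mem_eigenspace_iff] using hAv, hv⟩
  rw [Module.End.hasEigenvalue_iff_isRoot_charpoly, charpoly_toLin'] at hc
  exact (A.charpoly_map Complex.ofRealHom).symm ▸ hc.map

lemma ofReal_spectralRadius'_mem_peripheralSpectrum {A : Matrix n n ℝ}
    (hA : HasPerronEigenvalue A) : (spectralRadius' A : ℂ) ∈ peripheralSpectrum A := by
  obtain ⟨hρ, v, hv, hAv⟩ := hA
  simp only [peripheralSpectrum, Finset.mem_filter, Multiset.mem_toFinset, mem_roots',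
    Complex.norm_real, Real.norm_eq_abs, abs_of_nonneg hρ]
  exact ⟨⟨(charpoly_monic _).ne_zero, isRoot_charpoly_map_ofReal hv hAv⟩, trivial⟩

lemma eq_scalar_of_peripheralSpectrum_eq_singleton {A : Matrix n n ℝ}
    (hspec : peripheralSpectrum A = {(spectralRadius' A : ℂ)})
    (hidx : Fintype.card n ≤ expansionIndex A) : A = scalar n (spectralRadius' A) := by
  change _ ≤ ∑ μ ∈ peripheralSpectrum A, _ at hidx
  rw [hspec, Finset.sum_singleton] at hidx
  have hM := sub_eq_zero.1 (eq_zero_of_card_le_finrank_ker hidx)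
  apply map_injective Complex.ofReal_injective
  change A.map (fun x : ℝ => (x : ℂ)) = _
  rw [hM]
  ext i j
  rcases eq_or_ne i j with rfl | hij <;> simp [*]

lemma trace_eq_zero_and_det_neg_of_mem_peripheralSpectrum {A : Matrix (Fin 2) (Fin 2) ℝ}
    (hA : HasPerronEigenvalue A) {μ : ℂ} (hμ : μ ∈ peripheralSpectrum A)
    (hne : μ ≠ spectralRadius' A) : A.trace = 0 ∧ A.det < 0 := by
  obtain ⟨hρ, v, hv, hAv⟩ := hA
  set ρ := spectralRadius' A
  simp only [peripheralSpectrum, Finset.mem_filter, Multiset.mem_toFinset, mem_roots'] at hμ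
  obtain ⟨⟨-, hμ_root⟩, hμ_norm⟩ := hμ
  obtain ⟨hsum, hprod⟩ :=
    add_eq_trace_and_mul_eq_det_of_isRoot_charpoly hne hμ_root (isRoot_charpoly_map_ofReal hv hAv)
  simp only [trace_fin_two, det_fin_two, map_apply] at hsum hprod
  have hμ_eq : μ = ((A.trace - ρ : ℝ) : ℂ) := by
    push_cast [trace_fin_two]; linear_combination hsum
  have htr : A.trace - ρ = -ρ := by
    rw [hμ_eq, Complex.norm_real, Real.norm_eq_abs] at hμ_norm
    exact ((abs_eq hρ).1 hμ_norm).resolve_left fun h => hne (by rw [hμ_eq, h])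
  have hρ_pos : 0 < ρ := hρ.lt_of_ne fun h => hne (by rw [hμ_eq, htr, ← h]; simp)
  have hdet : A.det = -ρ ^ 2 := by
    rw [hμ_eq, htr] at hprod
    apply Complex.ofReal_injective
    push_cast [det_fin_two] at hprod ⊢
    linear_combination -hprod
  exact ⟨by linarith, by rw [hdet]; exact neg_neg_of_pos (pow_pos hρ_pos 2)⟩

lemma mem_range_scalar_or_trace_eq_zero_and_det_neg {A : Matrix (Fin 2) (Fin 2) ℝ}
    (hA : HasPerronEigenvalue A) (hidx : 2 ≤ expansionIndex A) :
    A ∈ Set.range (scalar (Fin 2)) ∨ (A.trace = 0 ∧ A.det < 0) := by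
  by_cases h : ∃ μ ∈ peripheralSpectrum A, μ ≠ spectralRadius' A
  · obtain ⟨μ, hμ, hne⟩ := h
    exact Or.inr (trace_eq_zero_and_det_neg_of_mem_peripheralSpectrum hA hμ hne)
  · push Not at h
    have hspec := Finset.eq_singleton_iff_unique_mem.2
      ⟨ofReal_spectralRadius'_mem_peripheralSpectrum hA, h⟩
    exact Or.inl ⟨_, (eq_scalar_of_peripheralSpectrum_eq_singleton hspec (by simpa using hidx)).symm⟩

end Perron

/-- Every Perron semigroup of `2×2` matrices of index two is reducible. -/
theorem perron_semigroup_2x2_index_two_reducible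
    (S : Set (Matrix (Fin 2) (Fin 2) ℝ))
    (hsemi : IsMatrixSemigroup S)
    (hperron : ∀ A ∈ S, HasPerronEigenvalue A)
    (hindex : (∀ A ∈ S, 2 ≤ expansionIndex A) ∧ (∃ A ∈ S, expansionIndex A = 2)) :
    ∃ V : Submodule ℝ (Fin 2 → ℝ), V ≠ ⊥ ∧ V ≠ ⊤ ∧ ∀ A ∈ S, ∀ x ∈ V, A.mulVec x ∈ V := by
  obtain ⟨v, hv, hvS⟩ := exists_common_eigenvector hsemi.2
    (fun A hA => mem_range_scalar_or_trace_eq_zero_and_det_neg (hperron A hA) (hindex.1 A hA))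
    (fun A hA => let ⟨_, v, hv, hAv⟩ := hperron A hA; ⟨v, hv, _, hAv⟩)
  refine ⟨ℝ ∙ v, by simpa using hv,
    Submodule.span_singleton_ne_top_of_one_lt_finrank (by simp) v, fun A hA x hx => ?_⟩
  obtain ⟨t, rfl⟩ := Submodule.mem_span_singleton.1 hx
  obtain ⟨c, hc⟩ := hvS A hA
  rw [mulVec_smul, hc, smul_smul]
  exact Submodule.smul_mem _ _ (Submodule.mem_span_singleton_self v)
end

section
/- Let d ≥ 2 and let 𝒜 be an irreducible set of real orthogonal d×d matrices. Then 𝒜 has no invariant cone: there is no proper cone K ⊆ ℝ^d with A K ⊆ K for every A ∈ 𝒜. -/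
open Matrix

open scoped Classical

/- For an orthogonal set preserving a proper cone `K`, the unit vectors of `K` form a
compact invariant set `D` whose convex hull is compact, convex, invariant and, because `K` is
pointed, avoids `0`. Its point of minimal norm is unique, so every isometry preserving the
hull fixes it: a nonzero common fixed vector, whose span is a proper invariant subspace. -/

theorem isCompact_convexHull_of_finiteDimensional {E : Type*} [AddCommGroup E] [Module ℝ E]
    [TopologicalSpace E] [IsTopologicalAddGroup E] [ContinuousSMul ℝ E] [FiniteDimensional ℝ E]
    {s : Set E} (hs : IsCompact s) : IsCompact (convexHull ℝ s) := by
  set N := Module.finrank ℝ E + 1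
  let combo (k : ℕ) (p : (Fin k → ℝ) × (Fin k → E)) : E := ∑ i, p.1 i • p.2 i
  -- Carathéodory: `N` points of `s` suffice for each point of the hull
  have hcombo : convexHull ℝ s =
      ⋃ k : Fin (N + 1), combo k '' (stdSimplex ℝ (Fin k) ×ˢ Set.univ.pi fun _ => s) := by
    apply subset_antisymm
    · intro x hx
      obtain ⟨ι, _, z, w, hzs, hind, hw, hw1, rfl⟩ := eq_pos_convex_span_of_mem_convexHull hx
      have hcard : Fintype.card ι < N + 1 :=
        Nat.lt_succ_of_le (hind.card_le_finrank_succ.trans (by grw [Submodule.finrank_le]))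
      let e := Fintype.equivFin ι
      refine Set.mem_iUnion.mpr ⟨⟨_, hcard⟩, (w ∘ e.symm, z ∘ e.symm), ⟨⟨fun i => (hw _).le, ?_⟩,
        fun i _ => hzs ⟨_, rfl⟩⟩, ?_⟩
      · exact (e.symm.sum_comp w).trans hw1
      · exact e.symm.sum_comp fun i => w i • z i
    · refine Set.iUnion_subset fun k => ?_
      rintro _ ⟨⟨w, z⟩, ⟨⟨hw0, hw1⟩, hz⟩, rfl⟩
      exact (convex_convexHull ℝ s).sum_mem (fun i _ => hw0 i) hw1
        fun i _ => subset_convexHull ℝ s (hz i trivial)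
  rw [hcombo]
  refine isCompact_iUnion fun k => ((isCompact_stdSimplex ℝ _).prod
    (isCompact_univ_pi fun _ => hs)).image ?_
  fun_prop

theorem exists_mem_ne_zero_of_interior_nonempty {E : Type*} [AddCommGroup E] [Module ℝ E]
    [TopologicalSpace E] [ContinuousAdd E] [ContinuousSMul ℝ E] [Nontrivial E] {K : Set E}
    (hK : (interior K).Nonempty) : ∃ x ∈ K, x ≠ 0 := by
  by_contra! h
  have : interior K ⊆ interior {0} := interior_mono fun x hx => h x hx
  simpa [interior_singleton] using hK.mono this

section Cone

variable {E : Type*} [AddCommGroup E] [Module ℝ E] {K : Set E}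

theorem convex_of_add_mem_of_smul_mem (hadd : ∀ x ∈ K, ∀ y ∈ K, x + y ∈ K)
    (hsmul : ∀ t : ℝ, 0 ≤ t → ∀ x ∈ K, t • x ∈ K) : Convex ℝ K :=
  fun x hx y hy a b ha hb _ => hadd _ (hsmul a ha x hx) _ (hsmul b hb y hy)

theorem convex_diff_zero_of_pointed (hadd : ∀ x ∈ K, ∀ y ∈ K, x + y ∈ K)
    (hsmul : ∀ t : ℝ, 0 ≤ t → ∀ x ∈ K, t • x ∈ K) (hpt : ∀ x ∈ K, -x ∈ K → x = 0) :
    Convex ℝ (K \ {0}) := by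
  rintro x ⟨hxK, hx0⟩ y ⟨hyK, hy0⟩ a b ha hb hab
  refine ⟨convex_of_add_mem_of_smul_mem hadd hsmul hxK hyK ha hb hab, fun hsum => ?_⟩
  rw [Set.mem_singleton_iff] at hsum
  rcases ha.eq_or_lt with rfl | ha
  · simp_all
  · have hax : a • x = 0 := hpt _ (hsmul a ha.le x hxK) <| by
      rw [eq_neg_of_add_eq_zero_left hsum, neg_neg]
      exact hsmul b hb y hyK
    exact hx0 ((smul_eq_zero.mp hax).resolve_left ha.ne')

end Cone

section Orthogonal

variable {n : Type*} [Fintype n]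

theorem dotProduct_mulVec_mulVec_of_transpose_mul_self [DecidableEq n] {A : Matrix n n ℝ}
    (hA : Aᵀ * A = 1) (x y : n → ℝ) : (A *ᵥ x) ⬝ᵥ (A *ᵥ y) = x ⬝ᵥ y := by
  rw [dotProduct_mulVec, ← mulVec_transpose, mulVec_mulVec, hA, one_mulVec]

theorem isCompact_setOf_dotProduct_self_eq_one : IsCompact {x : n → ℝ | x ⬝ᵥ x = 1} := by
  refine Metric.isCompact_of_isClosed_isBounded
    (isClosed_eq (continuous_id.dotProduct continuous_id) continuous_const)
    ((Metric.isBounded_closedBall (x := 0) (r := 1)).subset fun x hx => ?_)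
  rw [Metric.mem_closedBall, dist_zero_right, pi_norm_le_iff_of_nonneg zero_le_one]
  intro i
  rw [Real.norm_eq_abs, abs_le_one_iff_mul_self_le_one, ← hx.out]
  exact Finset.single_le_sum (fun j _ => mul_self_nonneg (x j)) (Finset.mem_univ i)

theorem eq_of_isMinOn_dotProduct_self {C : Set (n → ℝ)} (hC : Convex ℝ C) {c c' : n → ℝ}
    (hc : c ∈ C) (hmin : IsMinOn (fun x => x ⬝ᵥ x) C c) (hc' : c' ∈ C)
    (heq : c' ⬝ᵥ c' = c ⬝ᵥ c) : c' = c := by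
  set m := (1 / 2 : ℝ) • c + (1 / 2 : ℝ) • c'
  have hm : c ⬝ᵥ c ≤ m ⬝ᵥ m :=
    hmin (hC hc hc' (by norm_num) (by norm_num) (by norm_num))
  -- parallelogram law
  have hpar : (c' - c) ⬝ᵥ (c' - c) + 4 * (m ⬝ᵥ m) = 2 * (c ⬝ᵥ c) + 2 * (c' ⬝ᵥ c') := by
    simp only [m, sub_dotProduct, dotProduct_sub, add_dotProduct, dotProduct_add,
      smul_dotProduct, dotProduct_smul, smul_eq_mul, dotProduct_comm c' c]
    ring
  have hzero : (c' - c) ⬝ᵥ (c' - c) = 0 :=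
    le_antisymm (by linarith) (Finset.sum_nonneg fun i _ => mul_self_nonneg _)
  exact sub_eq_zero.mp (dotProduct_self_eq_zero.mp hzero)

theorem exists_mem_forall_mulVec_eq_self [DecidableEq n] {S : Set (Matrix n n ℝ)}
    (hS : ∀ A ∈ S, Aᵀ * A = 1) {C : Set (n → ℝ)} (hCc : IsCompact C) (hCconv : Convex ℝ C)
    (hCne : C.Nonempty) (hCinv : ∀ A ∈ S, ∀ x ∈ C, A *ᵥ x ∈ C) : ∃ c ∈ C, ∀ A ∈ S, A *ᵥ c = c := by
  obtain ⟨c, hc, hmin⟩ :=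
    hCc.exists_isMinOn hCne (continuous_id.dotProduct continuous_id).continuousOn
  exact ⟨c, hc, fun A hA => eq_of_isMinOn_dotProduct_self hCconv hc hmin (hCinv A hA c hc)
    (dotProduct_mulVec_mulVec_of_transpose_mul_self (hS A hA) c c)⟩

theorem not_matIrreducible_of_forall_mulVec_eq_self {S : Set (Matrix n n ℝ)}
    (hn : 2 ≤ Fintype.card n) {c : n → ℝ} (hc : c ≠ 0) (hfix : ∀ A ∈ S, A *ᵥ c = c) :
    ¬ MatIrreducible S := by
  refine fun hirr => hirr ⟨ℝ ∙ c, by simpa using hc, fun htop => ?_, fun A hA x hx => ?_⟩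
  · have h1 := finrank_span_singleton (K := ℝ) hc
    rw [htop, finrank_top, Module.finrank_fintype_fun_eq_card] at h1
    omega
  · obtain ⟨a, rfl⟩ := Submodule.mem_span_singleton.mp hx
    rw [mulVec_smul, hfix A hA]
    exact Submodule.smul_mem _ a (Submodule.mem_span_singleton_self c)

theorem exists_mem_diff_zero_forall_mulVec_eq_self [DecidableEq n] {S : Set (Matrix n n ℝ)}
    (hS : ∀ A ∈ S, Aᵀ * A = 1) {K : Set (n → ℝ)} (hKcl : IsClosed K)
    (hadd : ∀ x ∈ K, ∀ y ∈ K, x + y ∈ K) (hsmul : ∀ t : ℝ, 0 ≤ t → ∀ x ∈ K, t • x ∈ K)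
    (hpt : ∀ x ∈ K, -x ∈ K → x = 0) (hKinv : ∀ A ∈ S, ∀ x ∈ K, A *ᵥ x ∈ K)
    {x : n → ℝ} (hxK : x ∈ K) (hx : x ≠ 0) : ∃ c ∈ K \ {0}, ∀ A ∈ S, A *ᵥ c = c := by
  set D := K ∩ {y | y ⬝ᵥ y = 1}
  have hDK : D ⊆ K \ {0} := fun y hy => ⟨hy.1, fun h0 => by simp_all [D]⟩
  have hDne : D.Nonempty := by
    have hq : 0 < x ⬝ᵥ x := (Finset.sum_nonneg fun i _ => mul_self_nonneg (x i)).lt_of_ne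
      (Ne.symm (dotProduct_self_eq_zero.not.mpr hx))
    refine ⟨(√(x ⬝ᵥ x))⁻¹ • x, hsmul _ (by positivity) x hxK, ?_⟩
    simp only [Set.mem_ofPred_eq, smul_dotProduct, dotProduct_smul, smul_eq_mul]
    rw [← mul_assoc, ← mul_inv, Real.mul_self_sqrt hq.le, inv_mul_cancel₀ hq.ne']
  have hDinv : ∀ A ∈ S, A.mulVecLin '' D ⊆ D := by
    rintro A hA _ ⟨y, hy, rfl⟩
    exact ⟨hKinv A hA y hy.1,
      (dotProduct_mulVec_mulVec_of_transpose_mul_self (hS A hA) y y).trans hy.2⟩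
  have hDc : IsCompact D := isCompact_setOf_dotProduct_self_eq_one.inter_left hKcl
  obtain ⟨c, hc, hfix⟩ := exists_mem_forall_mulVec_eq_self hS
    (isCompact_convexHull_of_finiteDimensional hDc) (convex_convexHull ℝ D) hDne.convexHull
    fun A hA y hy => by
      have himage := A.mulVecLin.image_convexHull D ▸ convexHull_mono (hDinv A hA)
      exact himage ⟨y, hy, rfl⟩
  exact ⟨c, convexHull_min hDK (convex_diff_zero_of_pointed hadd hsmul hpt) hc, hfix⟩

end Orthogonal

/-- An irreducible set of orthogonal matrices (`d ≥ 2`) has no invariant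
proper cone. -/
theorem irreducible_orthogonal_no_invariant_cone
    {d : ℕ} (hd : 2 ≤ d) (𝒜 : Set (Matrix (Fin d) (Fin d) ℝ))
    (horth : ∀ A ∈ 𝒜, Aᵀ * A = 1)
    (hirr : MatIrreducible 𝒜) :
    ¬ ∃ K : Set (Fin d → ℝ), IsProperCone K ∧ ∀ A ∈ 𝒜, ∀ x ∈ K, A.mulVec x ∈ K := by
  rintro ⟨K, ⟨hKcl, hadd, hsmul, hint, hpt⟩, hKinv⟩
  have : NeZero d := ⟨by omega⟩
  obtain ⟨x, hxK, hx⟩ := exists_mem_ne_zero_of_interior_nonempty hint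
  obtain ⟨c, ⟨-, hc⟩, hfix⟩ :=
    exists_mem_diff_zero_forall_mulVec_eq_self horth hKcl hadd hsmul hpt hKinv hxK hx
  exact not_matIrreducible_of_forall_mulVec_eq_self (by simpa using hd) hc hfix hirr
end

section
/- For every m ≥ 2 and every vector v ∈ ℝ^{3m}, there exists a matrix A ∈ S_m such that A v = −v. In other words, every vector of ℝ^{3m} can be mapped to its opposite by a suitable matrix from S_m. -/
open Matrix

open scoped Classical

/-- The rotation group `SO(3)`. -/
def SO3 : Set (Matrix (Fin 3) (Fin 3) ℝ) := {U | Uᵀ * U = 1 ∧ U.det = 1}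

/-- The semigroup `S_m` of `3m × 3m` matrices: `A ∈ S_m` iff there are a map
`g : {1,…,m} → {1,…,m}` and rotations `U_1, …, U_m ∈ SO(3)` such that, viewing `A` as an
`m × m` array of `3 × 3` blocks, the block in position `(g i, i)` equals `U i` and all
other blocks vanish. -/
def Sm (m : ℕ) : Set (Matrix (Fin m × Fin 3) (Fin m × Fin 3) ℝ) :=
  {A | ∃ (g : Fin m → Fin m) (U : Fin m → Matrix (Fin 3) (Fin 3) ℝ),
    (∀ i, U i ∈ SO3) ∧
    ∀ (j i : Fin m) (a b : Fin 3), A (j, a) (i, b) = if j = g i then U i a b else 0}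

/-!
Take `A` block diagonal (`g = id`). In `ℝ³` every vector `w` is orthogonal to some unit
vector `n`, and the rotation by `π` about the axis `n`, namely `2 n nᵀ - 1`, sends `w` to `-w`;
use it as the block acting on the corresponding coordinates of `v`.
-/

namespace Matrix

theorem exists_dotProduct_self_eq_one_and_dotProduct_eq_zero {ι : Type*} [Fintype ι]
    (hι : 1 < Fintype.card ι) (w : ι → ℝ) : ∃ n : ι → ℝ, n ⬝ᵥ n = 1 ∧ n ⬝ᵥ w = 0 := by
  obtain ⟨n, hnw, hn0⟩ : ∃ n ∈ LinearMap.ker (dotProductBilin ℝ ℝ w), n ≠ 0 := by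
    refine Submodule.exists_mem_ne_zero_of_ne_bot (LinearMap.ker_ne_bot_of_finrank_lt ?_)
    simpa using hι
  rw [LinearMap.mem_ker, dotProductBilin_apply_apply] at hnw
  have hpos : 0 < n ⬝ᵥ n := by simpa using dotProduct_self_star_pos_iff.2 hn0
  refine ⟨(√(n ⬝ᵥ n))⁻¹ • n, ?_, ?_⟩
  · rw [smul_dotProduct, dotProduct_smul, smul_smul, smul_eq_mul, ← sq, inv_pow,
      Real.sq_sqrt hpos.le, inv_mul_cancel₀ hpos.ne']
  · rw [smul_dotProduct, dotProduct_comm n w, hnw, smul_zero]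

section HalfTurn

variable {ι : Type*} [DecidableEq ι]

def halfTurn (n : ι → ℝ) : Matrix ι ι ℝ := (2 : ℝ) • vecMulVec n n - 1

theorem halfTurn_transpose (n : ι → ℝ) : (halfTurn n)ᵀ = halfTurn n := by
  simp [halfTurn, transpose_vecMulVec]

variable [Fintype ι]

theorem halfTurn_mul_self {n : ι → ℝ} (hn : n ⬝ᵥ n = 1) : halfTurn n * halfTurn n = 1 := by
  have hP : vecMulVec n n * vecMulVec n n = vecMulVec n n := by
    rw [vecMulVec_mul_vecMulVec, hn, one_smul]
  simp only [halfTurn, sub_mul, mul_sub, smul_mul_smul_comm, hP, mul_one, one_mul]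
  module

theorem halfTurn_mulVec_of_dotProduct_eq_zero {n w : ι → ℝ} (hw : n ⬝ᵥ w = 0) :
    halfTurn n *ᵥ w = -w := by
  simp [halfTurn, sub_mulVec, smul_mulVec, vecMulVec_mulVec, hw]

theorem det_halfTurn {n : ι → ℝ} (hn : n ⬝ᵥ n = 1) :
    (halfTurn n).det = -(-1) ^ Fintype.card ι := by
  have : halfTurn n = -(1 + replicateCol Unit ((-2 : ℝ) • n) * replicateRow Unit n) := by
    rw [← vecMulVec_eq, halfTurn, smul_vecMulVec]
    module
  rw [this, det_neg, det_one_add_replicateCol_mul_replicateRow, dotProduct_smul, hn]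
  ring

end HalfTurn

theorem blockDiagonal_mulVec_apply {o m n α : Type*} [Fintype n] [Fintype o] [DecidableEq o]
    [NonUnitalNonAssocSemiring α] (M : o → Matrix m n α) (v : n × o → α) (i : m) (k : o) :
    (blockDiagonal M *ᵥ v) (i, k) = (M k *ᵥ fun j => v (j, k)) i := by
  simp [mulVec, dotProduct, blockDiagonal_apply, Fintype.sum_prod_type_right]

end Matrix

theorem halfTurn_mem_SO3 {n : Fin 3 → ℝ} (hn : n ⬝ᵥ n = 1) : halfTurn n ∈ SO3 :=
  ⟨by rw [halfTurn_transpose, halfTurn_mul_self hn], by norm_num [det_halfTurn hn]⟩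

theorem exists_mem_SO3_mulVec_eq_neg (w : Fin 3 → ℝ) : ∃ U ∈ SO3, U *ᵥ w = -w := by
  obtain ⟨n, hn, hnw⟩ := exists_dotProduct_self_eq_one_and_dotProduct_eq_zero (by simp) w
  exact ⟨halfTurn n, halfTurn_mem_SO3 hn, halfTurn_mulVec_of_dotProduct_eq_zero hnw⟩

theorem blockDiagonal_submatrix_swap_mem_Sm {m : ℕ} {U : Fin m → Matrix (Fin 3) (Fin 3) ℝ}
    (hU : ∀ i, U i ∈ SO3) : (blockDiagonal U).submatrix Prod.swap Prod.swap ∈ Sm m :=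
  ⟨id, U, hU, fun j i a b => by by_cases h : j = i <;> simp [blockDiagonal_apply, h]⟩

theorem Sm_maps_vector_to_opposite_general {m : ℕ} (v : Fin m × Fin 3 → ℝ) :
    ∃ A ∈ Sm m, A.mulVec v = -v := by
  choose U hU hUv using fun i => exists_mem_SO3_mulVec_eq_neg fun b => v (i, b)
  refine ⟨_, blockDiagonal_submatrix_swap_mem_Sm hU, ?_⟩
  ext ⟨i, a⟩
  rw [← Equiv.coe_prodComm, submatrix_mulVec_equiv]
  simp [blockDiagonal_mulVec_apply, hUv]

/-- Every vector of `ℝ^{3m}` can be mapped to its opposite by a suitable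
matrix from `S_m`. -/
theorem Sm_maps_vector_to_opposite {m : ℕ} (hm : 2 ≤ m) (v : Fin m × Fin 3 → ℝ) :
    ∃ A ∈ Sm m, A.mulVec v = -v :=
  Sm_maps_vector_to_opposite_general v
end
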